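/- arXiv:1909.01751 — 2 statements merged into one kernel-verified Lean document; each statement's English description precedes it below -/
import Mathlib

section
/- Let X be a finitely supported subset of an invariant set with no infinite uniformly supported subset, and let f : ℘_fin(X) → ℘_fin(X) be a finitely supported order-preserving function (with respect to set inclusion). Then f has a least fixed point supported by supp(f) ∪ supp(X). -/
open Pointwise

/-- The group of finitary permutations of the set `A` of atoms:
bijections of `A` that move only finitely many atoms. -/
def finPerm (A : Type*) : Subgroup (Equiv.Perm A) where
  carrier := {π | {a | π a ≠ a}.Finite}
  one_mem' := by simp
  mul_mem' := by
    intro π σ hπ hσ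
    apply Set.Finite.subset (hπ.union hσ)
    intro a ha
    by_contra hc
    simp only [Set.mem_union, Set.mem_setOf_eq, not_or, not_not] at hc
    exact ha (by simp [Equiv.Perm.mul_apply, hc.1, hc.2])
  inv_mem' := by
    intro π hπ
    apply Set.Finite.subset hπ
    intro a ha
    simp only [Set.mem_setOf_eq] at ha ⊢
    intro h
    exact ha (Equiv.Perm.inv_eq_iff_eq.mpr h.symm)

/-- `x` is finitely supported: some finite set of atoms supports it. -/
def FinitelySupported (A : Type*) {X : Type*} [MulAction (finPerm A) X] (x : X) : Prop :=
  ∃ S : Set A, S.Finite ∧ MulAction.Supports (finPerm A) S x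

/-- A subset `Z` of an `S_A`-set is uniformly supported if a single finite set
of atoms supports every element of `Z`. -/
def UniformlySupported (A : Type*) {X : Type*} [MulAction (finPerm A) X] (Z : Set X) : Prop :=
  ∃ S : Set A, S.Finite ∧ ∀ x ∈ Z, MulAction.Supports (finPerm A) S x

/-- The least support of `x`: the intersection of all finite sets of atoms supporting `x`. -/
noncomputable def supp (A : Type*) {X : Type*} [MulAction (finPerm A) X] (x : X) : Set A :=
  ⋂₀ {S : Set A | S.Finite ∧ MulAction.Supports (finPerm A) S x}

/-- `Z` contains no infinite uniformly supported subset
(`Z` is "FSM non-uniformly infinite"). -/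
def NoInfUS (A : Type*) {X : Type*} [MulAction (finPerm A) X] (Z : Set X) : Prop :=
  ∀ W ⊆ Z, UniformlySupported A W → W.Finite

/-- The uniform powerset `℘_us(X)`: all uniformly supported subsets of `X`. -/
def usPowerset (A : Type*) {X : Type*} [MulAction (finPerm A) X] (Z : Set X) : Set (Set X) :=
  {W | W ⊆ Z ∧ UniformlySupported A W}

/-- The finite powerset `℘_fin(X)`: all finite subsets of `X`. -/
def finPowerset {X : Type*} (Z : Set X) : Set (Set X) :=
  {W | W ⊆ Z ∧ W.Finite}

/-- `S` supports the function `f` on the domain `X` (Proposition 2.18'(2)):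
for every `π` fixing `S` pointwise and every `x ∈ X`, `π • x ∈ X` and
`f (π • x) = π • f x`. -/
def FnSupportsOn (A : Type*) {Y : Type*} [MulAction (finPerm A) Y]
    (X : Set Y) (S : Set A) (f : Y → Y) : Prop :=
  ∀ π : finPerm A, (∀ a ∈ S, π • a = a) → ∀ x ∈ X, π • x ∈ X ∧ f (π • x) = π • f x

/-- The least support of a function `f` with domain `X`. -/
noncomputable def fnSupp (A : Type*) {Y : Type*} [MulAction (finPerm A) Y]
    (X : Set Y) (f : Y → Y) : Set A :=
  ⋂₀ {S : Set A | S.Finite ∧ FnSupportsOn A X S f}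

/-!
The least fixed point is the limit of the Kleene chain `∅ ⊆ f ∅ ⊆ f (f ∅) ⊆ ⋯`. Every iterate
is a finite set supported by each finite support `S` of `f`, and the elements of a finite
`S`-supported set are themselves `S`-supported; so the union of the chain is a uniformly supported
subset of `X`, hence finite, and the chain stabilises. The least support of the limit lies inside
every finite support of `f`, hence inside `fnSupp f`. Least supports exist because finite
supports are closed under intersection: the pointwise stabiliser of `S₁ ∩ S₂` is generated by
transpositions, and each of these lies in the group generated by the stabilisers of `S₁` and `S₂`.
-/

open MulAction

theorem Set.sInter_mem_of_inter_mem {α : Type*} {𝒮 : Set (Set α)} {S₀ : Set α} (hS₀ : S₀ ∈ 𝒮)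
    (hfin : S₀.Finite) (hinter : ∀ S ∈ 𝒮, ∀ T ∈ 𝒮, S ∩ T ∈ 𝒮) : ⋂₀ 𝒮 ∈ 𝒮 := by
  have hF : {S ∈ 𝒮 | S ⊆ S₀}.Finite := hfin.finite_subsets.subset fun _ hS => hS.2
  obtain ⟨M, ⟨hM𝒮, hMS₀⟩, hMmin⟩ := hF.isPWO.exists_minimal ⟨S₀, hS₀, subset_rfl⟩
  have hMle : ∀ T ∈ 𝒮, M ⊆ T := fun T hT =>
    (hMmin ⟨hinter M hM𝒮 T hT, inter_subset_left.trans hMS₀⟩ inter_subset_left).trans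
      inter_subset_right
  rwa [(sInter_subset_of_mem hM𝒮).antisymm (subset_sInter hMle)]

theorem MulAction.supports_iff_fixingSubgroup_le_stabilizer {G α β : Type*} [Group G]
    [MulAction G α] [MulAction G β] {s : Set α} {b : β} :
    Supports G s b ↔ fixingSubgroup G s ≤ stabilizer G b :=
  ⟨fun h _ hg => h _ fun a ha => hg ⟨a, ha⟩,
    fun h _ hg => h (mem_fixingSubgroup_iff G |>.2 fun _ ha => hg ha)⟩

theorem MulAction.Supports.smul_smul_set {G α β : Type*} [Group G] [MulAction G α]
    [MulAction G β] {s : Set α} {b : β} (h : Supports G s b) (g : G) :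
    Supports G (g • s) (g • b) := by
  intro g' hg'
  have hconj : (g⁻¹ * g' * g) • b = b :=
    h _ fun a ha => by rw [mul_smul, mul_smul, hg' (Set.smul_mem_smul_set ha), inv_smul_smul]
  calc g' • g • b = g • (g⁻¹ * g' * g) • b := by simp only [mul_smul, smul_inv_smul]
    _ = g • b := by rw [hconj]

namespace finPerm

variable {A : Type*} [DecidableEq A]

def swap (a b : A) : finPerm A :=
  ⟨Equiv.swap a b, finite_compl_fixedBy_swap⟩

theorem swap_mem_fixingSubgroup {S : Set A} {a b : A} (ha : a ∉ S) (hb : b ∉ S) :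
    swap a b ∈ fixingSubgroup (finPerm A) S := fun ⟨_, hc⟩ =>
  Equiv.swap_apply_of_ne_of_ne (ne_of_mem_of_not_mem hc ha) (ne_of_mem_of_not_mem hc hb)

theorem fixingSubgroup_le_of_swap_mem {S : Set A} {H : Subgroup (finPerm A)}
    (hH : ∀ a b, a ∉ S → b ∉ S → swap a b ∈ H) : fixingSubgroup (finPerm A) S ≤ H := by
  set swaps : Set (Equiv.Perm A) := {σ | σ.IsSwap ∧ ∀ a ∈ S, σ a = a}
  have hle : Subgroup.closure swaps ≤ H.map (finPerm A).subtype := by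
    rw [Subgroup.closure_le]
    rintro _ ⟨⟨a, b, hab, rfl⟩, hfix⟩
    have ha : a ∉ S := fun h => hab (by simpa using (hfix a h).symm)
    have hb : b ∉ S := fun h => hab (by simpa using hfix b h)
    exact ⟨swap a b, hH a b ha hb, rfl⟩
  intro π hπ
  have hmem : (π : Equiv.Perm A) ∈ Subgroup.closure swaps := by
    refine (mem_closure_isSwap fun σ hσ => hσ.1).2 ⟨π.2, fun x => ?_⟩
    by_cases hx : (π : Equiv.Perm A) x = x
    · rw [hx]; exact mem_orbit_self x
    refine ⟨⟨Equiv.swap x _, Subgroup.subset_closure ⟨⟨x, _, Ne.symm hx, rfl⟩, ?_⟩⟩,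
      Equiv.swap_apply_left x _⟩
    intro a ha
    have hπa : (π : Equiv.Perm A) a = a := hπ ⟨a, ha⟩
    refine Equiv.swap_apply_of_ne_of_ne ?_ ?_
    · rintro rfl; exact hx hπa
    · rintro h; exact hx (by rw [← h, (π : Equiv.Perm A).injective (hπa.trans h)])
  obtain ⟨σ, hσ, hσπ⟩ := hle hmem
  rwa [Subtype.ext hσπ] at hσ

theorem swap_mem_of_fixingSubgroup_le [Infinite A] {S₁ S₂ : Set A} (h₁ : S₁.Finite)
    (h₂ : S₂.Finite) {H : Subgroup (finPerm A)} (hH₁ : fixingSubgroup (finPerm A) S₁ ≤ H)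
    (hH₂ : fixingSubgroup (finPerm A) S₂ ≤ H) {a b : A} (ha : a ∉ S₁ ∩ S₂) (hb : b ∉ S₁ ∩ S₂) :
    swap a b ∈ H := by
  -- through a fresh atom `c`: `swap a c` fixes `S₂` and `swap c b` fixes `S₁` pointwise
  have hmixed : ∀ a' b', a' ∉ S₂ → b' ∉ S₁ → swap a' b' ∈ H := by
    intro a' b' ha' hb'
    obtain ⟨c, hc⟩ := ((h₁.union h₂).union (Set.toFinite {a', b'})).infinite_compl.nonempty
    simp only [Set.mem_compl_iff, Set.mem_union, Set.mem_insert_iff, Set.mem_singleton_iff,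
      not_or] at hc
    have hac : swap a' c ∈ H := hH₂ (swap_mem_fixingSubgroup ha' hc.1.2)
    have hcb : swap c b' ∈ H := hH₁ (swap_mem_fixingSubgroup hc.1.1 hb')
    obtain ⟨σ, hσ, hσab⟩ := SubmonoidClass.swap_mem_trans (H.map (finPerm A).subtype)
      (Subgroup.mem_map_of_mem _ hac) (Subgroup.mem_map_of_mem _ hcb)
    rwa [show σ = swap a' b' from Subtype.ext hσab] at hσ
  rcases not_and_or.mp ha with ha₁ | ha₂ <;> rcases not_and_or.mp hb with hb₁ | hb₂
  · exact hH₁ (swap_mem_fixingSubgroup ha₁ hb₁)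
  · rw [show swap a b = swap b a from Subtype.ext (Equiv.swap_comm a b)]
    exact hmixed b a hb₂ ha₁
  · exact hmixed a b ha₂ hb₁
  · exact hH₂ (swap_mem_fixingSubgroup ha₂ hb₂)

end finPerm

theorem finPerm.fixingSubgroup_inter_le_sup {A : Type*} [Infinite A] {S₁ S₂ : Set A}
    (h₁ : S₁.Finite) (h₂ : S₂.Finite) : fixingSubgroup (finPerm A) (S₁ ∩ S₂) ≤
      fixingSubgroup (finPerm A) S₁ ⊔ fixingSubgroup (finPerm A) S₂ := by
  classical
  exact finPerm.fixingSubgroup_le_of_swap_mem fun _ _ ha hb =>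
    finPerm.swap_mem_of_fixingSubgroup_le h₁ h₂ le_sup_left le_sup_right ha hb

section FinitelySupported

variable {A X : Type*} [MulAction (finPerm A) X]

theorem MulAction.Supports.inter [Infinite A] {x : X} {S₁ S₂ : Set A} (h₁ : S₁.Finite)
    (h₂ : S₂.Finite) (hs₁ : Supports (finPerm A) S₁ x) (hs₂ : Supports (finPerm A) S₂ x) :
    Supports (finPerm A) (S₁ ∩ S₂) x := by
  rw [supports_iff_fixingSubgroup_le_stabilizer] at hs₁ hs₂ ⊢
  exact (finPerm.fixingSubgroup_inter_le_sup h₁ h₂).trans (sup_le hs₁ hs₂)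

theorem supp_subset_of_supports {x : X} {S : Set A} (hS : S.Finite)
    (hx : Supports (finPerm A) S x) : supp A x ⊆ S :=
  Set.sInter_subset_of_mem ⟨hS, hx⟩

theorem FinitelySupported.finite_supp_and_supports [Infinite A] {x : X}
    (hx : FinitelySupported A x) :
    (supp A x).Finite ∧ Supports (finPerm A) (supp A x) x :=
  let ⟨_, hS, hSx⟩ := hx
  Set.sInter_mem_of_inter_mem (𝒮 := {S | S.Finite ∧ Supports (finPerm A) S x}) ⟨hS, hSx⟩ hS
    fun _ h₁ _ h₂ => ⟨h₁.1.inter_of_left _, h₁.2.inter h₁.1 h₂.1 h₂.2⟩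

theorem FinitelySupported.smul {x : X} (hx : FinitelySupported A x) (π : finPerm A) :
    FinitelySupported A (π • x) :=
  let ⟨_, hS, hSx⟩ := hx
  ⟨_, hS.smul_set, hSx.smul_smul_set π⟩

theorem FinitelySupported.supp_smul_subset [Infinite A] {x : X} (hx : FinitelySupported A x)
    (π : finPerm A) : supp A (π • x) ⊆ π • supp A x :=
  let ⟨hfin, hsupp⟩ := hx.finite_supp_and_supports
  supp_subset_of_supports hfin.smul_set (hsupp.smul_smul_set π)

theorem FinitelySupported.supp_smul [Infinite A] {x : X} (hx : FinitelySupported A x)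
    (π : finPerm A) : supp A (π • x) = π • supp A x := by
  refine (hx.supp_smul_subset π).antisymm ?_
  rw [Set.smul_set_subset_iff_subset_inv_smul_set]
  simpa using (hx.smul π).supp_smul_subset π⁻¹

theorem FinitelySupported.supports_sInter [Infinite A] {x : X} (hx : FinitelySupported A x)
    {𝒮 : Set (Set A)} (h𝒮 : ∀ S ∈ 𝒮, S.Finite ∧ Supports (finPerm A) S x) :
    Supports (finPerm A) (⋂₀ 𝒮) x :=
  hx.finite_supp_and_supports.2.mono <|
    Set.subset_sInter fun S hS => supp_subset_of_supports (h𝒮 S hS).1 (h𝒮 S hS).2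

/-- Otherwise some atom `a ∈ supp y \ T` could be swapped with infinitely many fresh atoms `b`,
giving pairwise distinct elements `swap a b • y` of `Z`, told apart by their supports. -/
theorem MulAction.Supports.of_mem_of_finite [Infinite A] {Z : Set X} {T : Set A}
    (hZ : Z.Finite) (hT : T.Finite) (hTZ : Supports (finPerm A) T Z) {y : X} (hy : y ∈ Z)
    (hfs : FinitelySupported A y) : Supports (finPerm A) T y := by
  classical
  obtain ⟨hfin, hsupp⟩ := hfs.finite_supp_and_supports
  refine hsupp.mono fun a ha => by_contra fun haT => ?_
  have hmaps : Set.MapsTo (fun b => finPerm.swap a b • y) (T ∪ supp A y ∪ {a})ᶜ Z := by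
    intro b hb
    simp only [Set.mem_compl_iff, Set.mem_union, not_or] at hb
    have hfix : finPerm.swap a b • Z = Z := supports_iff_fixingSubgroup_le_stabilizer.1 hTZ
      (finPerm.swap_mem_fixingSubgroup haT hb.1.1)
    exact hfix ▸ Set.smul_mem_smul_set hy
  obtain ⟨b, hb, c, hc, hbc, heq⟩ :=
    ((hT.union hfin).union (Set.finite_singleton a)).infinite_compl.exists_ne_map_eq_of_mapsTo
      hmaps hZ
  simp only [Set.mem_compl_iff, Set.mem_union, Set.mem_singleton_iff, not_or] at hb hc
  have hb_mem : b ∈ supp A (finPerm.swap a b • y) := by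
    rw [hfs.supp_smul]
    exact ⟨a, ha, Equiv.swap_apply_left a b⟩
  have hb_not_mem : b ∉ supp A (finPerm.swap a c • y) := by
    rw [hfs.supp_smul]
    rintro ⟨d, hd, hdb⟩
    change Equiv.swap a c d = b at hdb
    rw [Equiv.swap_apply_eq_iff, Equiv.swap_apply_of_ne_of_ne hb.2 hbc] at hdb
    exact hb.1.2 (hdb ▸ hd)
  exact hb_not_mem (heq ▸ hb_mem)

end FinitelySupported

theorem FnSupportsOn.supports_apply {A Y : Type*} [MulAction (finPerm A) Y] {D : Set Y}
    {S : Set A} {f : Y → Y} (hf : FnSupportsOn A D S f) {x : Y} (hx : x ∈ D)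
    (hS : Supports (finPerm A) S x) : Supports (finPerm A) S (f x) := fun π hπ => by
  rw [← (hf π (fun a ha => hπ ha) x hx).2, hS π hπ]

theorem FnSupportsOn.supports_iterate {A Y : Type*} [MulAction (finPerm A) Y] {D : Set Y}
    {S : Set A} {f : Y → Y} (hf : FnSupportsOn A D S f) (hD : Set.MapsTo f D D) {x : Y}
    (hx : x ∈ D) (hS : Supports (finPerm A) S x) (n : ℕ) :
    Supports (finPerm A) S (f^[n] x) := by
  induction n with
  | zero => exact hS
  | succ n ih =>
    rw [Function.iterate_succ_apply']
    exact hf.supports_apply (hD.iterate n hx) ih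

section Kleene

variable {α : Type*} [PartialOrder α] [OrderBot α] {D : Set α} {f : α → α}

theorem monotone_iterate_bot (hD : Set.MapsTo f D D) (hbot : ⊥ ∈ D) (hf : MonotoneOn f D) :
    Monotone fun n => f^[n] ⊥ := by
  refine monotone_nat_of_le_succ fun n => ?_
  induction n with
  | zero => exact bot_le
  | succ n ih =>
    rw [Function.iterate_succ_apply', Function.iterate_succ_apply' f (n + 1)]
    exact hf (hD.iterate n hbot) (hD.iterate (n + 1) hbot) ih

theorem iterate_bot_le_of_map_le (hD : Set.MapsTo f D D) (hbot : ⊥ ∈ D) (hf : MonotoneOn f D)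
    {x : α} (hx : x ∈ D) (hfx : f x ≤ x) (n : ℕ) : f^[n] ⊥ ≤ x := by
  induction n with
  | zero => exact bot_le
  | succ n ih =>
    rw [Function.iterate_succ_apply']
    exact (hf (hD.iterate n hbot) hx ih).trans hfx

end Kleene

theorem Monotone.exists_succ_eq_of_finite_range {α : Type*} [PartialOrder α] {g : ℕ → α}
    (hg : Monotone g) (hfin : (Set.range g).Finite) : ∃ n, g (n + 1) = g n := by
  obtain ⟨m, n, hmn, hgmn⟩ := Set.Finite.exists_lt_map_eq_of_forall_mem Set.mem_range_self hfin
  exact ⟨m, ((hg hmn).trans_eq hgmn.symm).antisymm (hg (Nat.le_succ m))⟩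

theorem stmt6_general {A Y : Type*} [Infinite A] [MulAction (finPerm A) Y]
    (hinv : ∀ y : Y, FinitelySupported A y) (X : Set Y)
    (h : NoInfUS A X)
    (f : Set Y → Set Y)
    (hmap : ∀ Z ∈ finPowerset X, f Z ∈ finPowerset X)
    (hfs : ∃ S : Set A, S.Finite ∧ FnSupportsOn A (finPowerset X) S f)
    (hmono : ∀ Z ∈ finPowerset X, ∀ W ∈ finPowerset X, Z ⊆ W → f Z ⊆ f W) :
    ∃ L ∈ finPowerset X, f L = L ∧
      (∀ Z ∈ finPowerset X, f Z = Z → L ⊆ Z) ∧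
      MulAction.Supports (finPerm A) (fnSupp A (finPowerset X) f ∪ supp A X) L := by
  obtain ⟨S, hSfin, hS⟩ := hfs
  have hD : Set.MapsTo f (finPowerset X) (finPowerset X) := hmap
  have hbot : ⊥ ∈ finPowerset X := ⟨bot_le, Set.finite_empty⟩
  have hiter : ∀ n, f^[n] ⊥ ∈ finPowerset X := fun n => hD.iterate n hbot
  have hsupp : ∀ S', FnSupportsOn A (finPowerset X) S' f → ∀ n,
      Supports (finPerm A) S' (f^[n] ⊥) := fun S' hS' =>
    hS'.supports_iterate hD hbot fun π _ => Set.smul_set_empty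
  have hU : (⋃ n, f^[n] ⊥).Finite := by
    refine h _ (Set.iUnion_subset fun n => (hiter n).1) ⟨S, hSfin, fun y hy => ?_⟩
    obtain ⟨n, hn⟩ := Set.mem_iUnion.1 hy
    exact (hsupp S hS n).of_mem_of_finite (hiter n).2 hSfin hn (hinv y)
  obtain ⟨n, hn⟩ := (monotone_iterate_bot hD hbot hmono).exists_succ_eq_of_finite_range <|
    hU.finite_subsets.subset <| Set.range_subset_iff.2 <| Set.subset_iUnion fun n => f^[n] ⊥
  rw [Function.iterate_succ_apply'] at hn
  refine ⟨f^[n] ⊥, hiter n, hn, fun Z hZ hfZ =>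
    iterate_bot_le_of_map_le hD hbot hmono hZ hfZ.le n, ?_⟩
  have hL : FinitelySupported A (f^[n] ⊥) := ⟨S, hSfin, hsupp S hS n⟩
  exact (hL.supports_sInter fun S' hS' => ⟨hS'.1, hsupp S' hS'.2 n⟩).mono Set.subset_union_left

/-- a finitely supported inclusion-order-preserving self-map of `℘_fin(X)`,
for `X` not FSM uniformly infinite, has a least fixed point supported by
`supp(f) ∪ supp(X)`. -/
theorem stmt6 {A Y : Type*} [Infinite A] [MulAction (finPerm A) Y]
    (hinv : ∀ y : Y, FinitelySupported A y) (X : Set Y)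
    (hX : FinitelySupported A X) (h : NoInfUS A X)
    (f : Set Y → Set Y)
    (hmap : ∀ Z ∈ finPowerset X, f Z ∈ finPowerset X)
    (hfs : ∃ S : Set A, S.Finite ∧ FnSupportsOn A (finPowerset X) S f)
    (hmono : ∀ Z ∈ finPowerset X, ∀ W ∈ finPowerset X, Z ⊆ W → f Z ⊆ f W) :
    ∃ L ∈ finPowerset X, f L = L ∧
      (∀ Z ∈ finPowerset X, f Z = Z → L ⊆ Z) ∧
      MulAction.Supports (finPerm A) (fnSupp A (finPowerset X) f ∪ supp A X) L :=
  stmt6_general hinv X h f hmap hfs hmono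
end

section
/- The finitely supported powerset ℘_fs(A) contains no infinite uniformly supported subset: for any finite S ⊆ A, the subsets of A supported by S are exactly the subsets of S and the supersets of A \ S, hence there are at most 2^{|S|+1} of them. -/
open Pointwise

open Classical in
lemma swap_mem_finPerm {A : Type*} (a b : A) : Equiv.swap a b ∈ finPerm A := by
  show {c | Equiv.swap a b c ≠ c}.Finite
  apply Set.Finite.subset ((Set.finite_singleton b).insert a)
  intro c hc
  simp only [Set.mem_setOf_eq] at hc
  rcases eq_or_ne c a with rfl | h1
  · exact Set.mem_insert _ _
  rcases eq_or_ne c b with rfl | h2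
  · exact Set.mem_insert_of_mem _ rfl
  exact absurd (Equiv.swap_apply_of_ne_of_ne h1 h2) hc

lemma supports_iff' {A : Type*} [Infinite A] (S : Set A) (X : Set A) :
    MulAction.Supports (finPerm A) S X ↔ X ⊆ S ∨ Sᶜ ⊆ X := by
  classical
  have key : ∀ Y : Set A, Y ⊆ S → ∀ π : finPerm A, (∀ a ∈ S, π • a = a) → π • Y = Y := by
    intro Y hYS π hπ
    have hfix : ∀ x ∈ Y, π • x = x := fun x hx => hπ x (hYS hx)
    ext c
    simp only [Set.mem_smul_set]
    constructor
    · rintro ⟨x, hx, rfl⟩; rwa [hfix x hx]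
    · intro hc; exact ⟨c, hc, hfix c hc⟩
  constructor
  · intro h
    by_contra hc
    push_neg at hc
    obtain ⟨a, haX, haS⟩ := Set.not_subset.mp hc.1
    obtain ⟨b, hbS, hbX⟩ := Set.not_subset.mp hc.2
    have hbS' : b ∉ S := hbS
    set π : finPerm A := ⟨Equiv.swap a b, swap_mem_finPerm a b⟩ with hπdef
    have hπS : ∀ c ∈ S, π • c = c := by
      intro c hcS
      show Equiv.swap a b c = c
      refine Equiv.swap_apply_of_ne_of_ne (fun h => haS ?_) (fun h => hbS' ?_)
      · rw [← h]; exact hcS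
      · rw [← h]; exact hcS
    have hX : π • X = X := h π hπS
    have : π • a ∈ π • X := Set.smul_mem_smul_set haX
    rw [hX] at this
    have hab : (π : Equiv.Perm A) a = b := Equiv.swap_apply_left a b
    have : b ∈ X := by
      have hsm : π • a = b := hab
      rwa [hsm] at this
    exact hbX this
  · rintro (hXS | hSX) π hπ
    · exact key X hXS π hπ
    · have hXc : Xᶜ ⊆ S := by
        intro x hx
        by_contra hxS
        exact hx (hSX hxS)
      have := key Xᶜ hXc π hπ
      rw [Set.smul_set_compl] at this
      exact compl_injective this

open Classical in
lemma supported_finite {A : Type*} [Infinite A] (S : Set A) (hS : S.Finite) :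
    {X : Set A | MulAction.Supports (finPerm A) S X}.Finite := by
  have : {X : Set A | MulAction.Supports (finPerm A) S X}
      ⊆ {X | X ⊆ S} ∪ (compl '' {X | X ⊆ S}) := by
    intro X hX
    rcases (supports_iff' S X).mp hX with h | h
    · exact Or.inl h
    · right
      exact ⟨Xᶜ, by simpa using Set.compl_subset_comm.mpr h, compl_compl X⟩
  exact Set.Finite.subset ((hS.finite_subsets).union (hS.finite_subsets.image _)) this

open Classical in
lemma powset_ncard {A : Type*} (S : Set A) (hS : S.Finite) (P : Set (Set A))
    (hrec : ∀ X ∈ P, ∀ Y ∈ P, X ∩ S = Y ∩ S → X = Y) :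
    P.ncard ≤ 2 ^ S.ncard := by
  have : P.ncard ≤ (↑hS.toFinset.powerset : Set (Finset A)).ncard := by
    apply Set.ncard_le_ncard_of_injOn (fun X => hS.toFinset.filter (· ∈ X))
    · intro X _
      simp only [Finset.coe_powerset, Set.mem_preimage, Set.mem_powerset_iff]
      intro a ha
      simp only [Finset.coe_filter, Set.mem_setOf_eq] at ha
      exact ha.1
    · intro X hX Y hY hXY
      dsimp only at hXY
      apply hrec X hX Y hY
      ext a
      constructor
      · intro ⟨haX, haS⟩
        have : a ∈ hS.toFinset.filter (· ∈ X) := by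
          simp [haX, hS.mem_toFinset, haS]
        rw [hXY] at this
        simp only [Finset.mem_filter, hS.mem_toFinset] at this
        exact ⟨this.2, this.1⟩
      · intro ⟨haY, haS⟩
        have : a ∈ hS.toFinset.filter (· ∈ Y) := by
          simp [haY, hS.mem_toFinset, haS]
        rw [← hXY] at this
        simp only [Finset.mem_filter, hS.mem_toFinset] at this
        exact ⟨this.2, this.1⟩
  calc P.ncard ≤ (↑hS.toFinset.powerset : Set (Finset A)).ncard := this
    _ = hS.toFinset.powerset.card := by rw [Set.ncard_coe_finset]
    _ = 2 ^ hS.toFinset.card := Finset.card_powerset _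
    _ = 2 ^ S.ncard := by rw [Set.ncard_eq_toFinset_card S hS]

/-- the subsets of `A` supported by a finite `S ⊆ A` are exactly the
subsets of `S` and the supersets of `A \ S`, of which there are at most `2^(|S|+1)`;
consequently `℘_fs(A)` contains no infinite uniformly supported subset. -/
theorem stmt13 {A : Type*} [Infinite A] :
    (∀ S : Set A, S.Finite → ∀ X : Set A,
        (MulAction.Supports (finPerm A) S X ↔ X ⊆ S ∨ Sᶜ ⊆ X)) ∧
    (∀ S : Set A, S.Finite →
        {X : Set A | MulAction.Supports (finPerm A) S X}.ncard ≤ 2 ^ (S.ncard + 1)) ∧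
    ∀ F : Set (Set A), (∀ X ∈ F, FinitelySupported A X) →
        UniformlySupported A F → F.Finite := by
  refine ⟨fun S _ X => supports_iff' S X, ?_, ?_⟩
  · intro S hS
    have hsub : {X : Set A | MulAction.Supports (finPerm A) S X}
        ⊆ {X | X ⊆ S} ∪ {X | Sᶜ ⊆ X} := by
      intro X hX
      exact (supports_iff' S X).mp hX
    calc {X : Set A | MulAction.Supports (finPerm A) S X}.ncard
        ≤ ({X | X ⊆ S} ∪ {X : Set A | Sᶜ ⊆ X}).ncard :=
          Set.ncard_le_ncard hsub (by
            apply Set.Finite.union hS.finite_subsets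
            have : {X : Set A | Sᶜ ⊆ X} ⊆ compl '' {X | X ⊆ S} := fun X h =>
              ⟨Xᶜ, by simpa using Set.compl_subset_comm.mpr h, compl_compl X⟩
            exact Set.Finite.subset (hS.finite_subsets.image _) this)
      _ ≤ {X : Set A | X ⊆ S}.ncard + {X : Set A | Sᶜ ⊆ X}.ncard := Set.ncard_union_le _ _
      _ ≤ 2 ^ S.ncard + 2 ^ S.ncard := by
          gcongr
          · exact powset_ncard S hS _ (fun X hX Y hY h => by
              rw [← Set.inter_eq_self_of_subset_left hX, h,
                Set.inter_eq_self_of_subset_left hY])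
          · exact powset_ncard S hS _ (fun X hX Y hY h => by
              have hX' : X = (X ∩ S) ∪ Sᶜ := by
                rw [Set.union_comm]
                ext a
                by_cases haS : a ∈ S
                · simp [haS]
                · simp [haS, hX haS]
              have hY' : Y = (Y ∩ S) ∪ Sᶜ := by
                rw [Set.union_comm]
                ext a
                by_cases haS : a ∈ S
                · simp [haS]
                · simp [haS, hY haS]
              rw [hX', h, ← hY'])
      _ = 2 ^ (S.ncard + 1) := by ring
  · intro F _ ⟨S, hS, hsupp⟩
    exact Set.Finite.subset (supported_finite S hS) (fun X hX => hsupp X hX)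
end
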